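/- For n ≥ 3, the set of prefixes of length f_{2(n−1)} − 1 of words in A_n equals the set of prefixes of length f_{2(n−1)} − 1 of words in A_{n+1}; that is, A_n[1, f_{2(n−1)}−1] = A_{n+1}[1, f_{2(n−1)}−1]. -/

import Mathlib

/-- The two-letter alphabet. -/
inductive Letter : Type
  | a : Letter
  | b : Letter
deriving DecidableEq

/-- A word is a finite sequence of letters. -/
abbrev Word := List Letter

/-- Concatenation set `UV = {uv : u ∈ U, v ∈ V}`. -/
def concatSet (U V : Set Word) : Set Word := {w | ∃ u ∈ U, ∃ v ∈ V, w = u ++ v}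

mutual
  /-- The sets `A_n` of inflated words (indexed so that `Aset 1 = {a}`). -/
  def Aset : ℕ → Set Word
    | 0 => ∅
    | 1 => {[Letter.a]}
    | n + 2 => concatSet (Bset (n + 1)) (concatSet (Aset (n + 1)) (Aset (n + 1)))
  /-- The sets `B_n` of inflated words (indexed so that `Bset 1 = {b}`). -/
  def Bset : ℕ → Set Word
    | 0 => ∅
    | 1 => {[Letter.b]}
    | n + 2 => concatSet (Aset (n + 1)) (Bset (n + 1)) ∪ concatSet (Bset (n + 1)) (Aset (n + 1))
end

/-- The sub-word `w[a,b] = w_a w_{a+1} … w_b` (1-indexed). -/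
def wordSlice (w : Word) (i j : ℕ) : Word := (w.drop (i - 1)).take (j - i + 1)

/-- `W[a,b] = {w[a,b] : w ∈ W}`. -/
def setSlice (W : Set Word) (i j : ℕ) : Set Word := {x | ∃ w ∈ W, x = wordSlice w i j}

/-- `x` is a sub-word (contiguous factor) of `w`. -/
def IsFactor (x w : Word) : Prop := ∃ u v : Word, w = u ++ x ++ v

/-- `F(S, m)`: the set of all sub-words of length `m` of words in `S`. -/
def FactorSet (S : Set Word) (m : ℕ) : Set Word :=
  {x | x.length = m ∧ ∃ w ∈ S, IsFactor x w}

/-- `F(A, m) = ⋃_{n ≥ 1} F(A_n, m)`. -/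
def FA (m : ℕ) : Set Word := ⋃ n ∈ {n : ℕ | 1 ≤ n}, FactorSet (Aset n) m

/-- `F(B, m) = ⋃_{n ≥ 1} F(B_n, m)`. -/
def FB (m : ℕ) : Set Word := ⋃ n ∈ {n : ℕ | 1 ≤ n}, FactorSet (Bset n) m

/-- The golden mean `τ = (1 + √5)/2`. -/
noncomputable def tau : ℝ := (1 + Real.sqrt 5) / 2

/-! The length of `A_k` is `f_{2k}` and that of `B_k` is `f_{2k-1}`, so with `L = f_{2(n-1)} - 1`
the length-`L` prefixes of `A_n = B_{n-1}A_{n-1}A_{n-1}` are those of `B_{n-1}A_{n-1}`, while those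
of `A_{n+1} = B_nA_nA_n` are those of `B_n = A_{n-1}B_{n-1} ∪ B_{n-1}A_{n-1}`. The first part
contributes `A_{n-1}` with its last letter removed, and by induction on the recursion that word is
always a prefix of a word of `B_{n-1}A_{n-1}`, so it adds nothing new. -/

lemma concatSet_assoc (U V W : Set Word) :
    concatSet (concatSet U V) W = concatSet U (concatSet V W) := by
  ext x
  constructor
  · rintro ⟨_, ⟨u, hu, v, hv, rfl⟩, w, hw, rfl⟩
    exact ⟨u, hu, v ++ w, ⟨v, hv, w, hw, rfl⟩, List.append_assoc u v w⟩
  · rintro ⟨u, hu, _, ⟨v, hv, w, hw, rfl⟩, rfl⟩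
    exact ⟨u ++ v, ⟨u, hu, v, hv, rfl⟩, w, hw, (List.append_assoc u v w).symm⟩

lemma image_take_concatSet_of_le {U V : Set Word} {k : ℕ} (hU : ∀ u ∈ U, k ≤ u.length)
    (hV : V.Nonempty) : List.take k '' concatSet U V = List.take k '' U := by
  ext x
  constructor
  · rintro ⟨_, ⟨u, hu, v, -, rfl⟩, rfl⟩
    exact ⟨u, hu, (List.take_append_of_le_length (hU u hu)).symm⟩
  · rintro ⟨u, hu, rfl⟩
    obtain ⟨v, hv⟩ := hV
    exact ⟨u ++ v, ⟨u, hu, v, hv, rfl⟩, List.take_append_of_le_length (hU u hu)⟩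

lemma Set.Nonempty.concatSet {U V : Set Word} (hU : U.Nonempty) (hV : V.Nonempty) :
    (concatSet U V).Nonempty :=
  let ⟨u, hu⟩ := hU
  let ⟨v, hv⟩ := hV
  ⟨u ++ v, u, hu, v, hv, rfl⟩

lemma setSlice_one_eq_image_take (W : Set Word) {k : ℕ} (hk : k ≠ 0) :
    setSlice W 1 k = List.take k '' W := by
  ext x
  simp [setSlice, wordSlice, Nat.sub_add_cancel (Nat.one_le_iff_ne_zero.mpr hk), eq_comm]

lemma Aset_succ_succ (n : ℕ) :
    Aset (n + 2) = concatSet (Bset (n + 1)) (concatSet (Aset (n + 1)) (Aset (n + 1))) := by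
  rw [Aset]

lemma Bset_succ_succ (n : ℕ) :
    Bset (n + 2) =
      concatSet (Aset (n + 1)) (Bset (n + 1)) ∪ concatSet (Bset (n + 1)) (Aset (n + 1)) := by
  rw [Bset]

lemma Aset_succ_nonempty_and_Bset_succ_nonempty (n : ℕ) :
    (Aset (n + 1)).Nonempty ∧ (Bset (n + 1)).Nonempty := by
  induction n with
  | zero => exact ⟨⟨[Letter.a], rfl⟩, ⟨[Letter.b], rfl⟩⟩
  | succ n ih =>
    obtain ⟨hA, hB⟩ := ih
    rw [Aset_succ_succ, Bset_succ_succ]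
    exact ⟨hB.concatSet (hA.concatSet hA), (hA.concatSet hB).inl⟩

lemma Aset_succ_nonempty (n : ℕ) : (Aset (n + 1)).Nonempty :=
  (Aset_succ_nonempty_and_Bset_succ_nonempty n).1

lemma Bset_succ_nonempty (n : ℕ) : (Bset (n + 1)).Nonempty :=
  (Aset_succ_nonempty_and_Bset_succ_nonempty n).2

lemma length_of_mem_Aset_succ_and_Bset_succ (n : ℕ) :
    (∀ w ∈ Aset (n + 1), w.length = Nat.fib (2 * n + 2)) ∧
      ∀ w ∈ Bset (n + 1), w.length = Nat.fib (2 * n + 1) := by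
  induction n with
  | zero =>
    constructor <;> rintro w rfl <;> rfl
  | succ n ih =>
    obtain ⟨ihA, ihB⟩ := ih
    have hfibB : Nat.fib (2 * (n + 1) + 1) = Nat.fib (2 * n + 1) + Nat.fib (2 * n + 2) :=
      Nat.fib_add_two
    have hfibA : Nat.fib (2 * (n + 1) + 2) = Nat.fib (2 * n + 2) + Nat.fib (2 * (n + 1) + 1) :=
      Nat.fib_add_two
    rw [Aset_succ_succ, Bset_succ_succ]
    constructor
    · rintro _ ⟨u, hu, _, ⟨v, hv, w, hw, rfl⟩, rfl⟩
      simp only [List.length_append, ihB u hu, ihA v hv, ihA w hw]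
      omega
    · rintro _ (⟨u, hu, v, hv, rfl⟩ | ⟨u, hu, v, hv, rfl⟩)
      · simp only [List.length_append, ihA u hu, ihB v hv]
        omega
      · simp only [List.length_append, ihB u hu, ihA v hv]
        omega

lemma length_of_mem_Aset {n : ℕ} {w : Word} (hw : w ∈ Aset n) :
    w.length = Nat.fib (2 * n) := by
  cases n with
  | zero => exact absurd hw (by simp [Aset])
  | succ n => exact (length_of_mem_Aset_succ_and_Bset_succ n).1 w hw

lemma length_of_mem_Bset {n : ℕ} {w : Word} (hw : w ∈ Bset (n + 1)) :
    w.length = Nat.fib (2 * n + 1) :=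
  (length_of_mem_Aset_succ_and_Bset_succ n).2 w hw

lemma ne_nil_of_mem_Aset {n : ℕ} {w : Word} (hw : w ∈ Aset n) : w ≠ [] := by
  cases n with
  | zero => exact absurd hw (by simp [Aset])
  | succ n =>
    rw [← List.length_pos_iff, length_of_mem_Aset hw]
    exact Nat.fib_pos.mpr (by omega)

lemma exists_dropLast_prefix_of_mem_Aset (n : ℕ) :
    ∀ x ∈ Aset n, ∃ w ∈ concatSet (Bset n) (Aset n), x.dropLast <+: w := by
  induction n using Nat.twoStepInduction with
  | zero => simp [Aset]
  | one =>
    rintro x rfl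
    exact ⟨[Letter.b, Letter.a], ⟨[Letter.b], rfl, [Letter.a], rfl, rfl⟩, by simp⟩
  | more n _ ih =>
    rw [Aset_succ_succ]
    rintro _ ⟨b, hb, _, ⟨a₁, ha₁, a₂, ha₂, rfl⟩, rfl⟩
    obtain ⟨_, ⟨c, hc, d, hd, rfl⟩, hpre⟩ := ih a₂ ha₂
    obtain ⟨e, he⟩ := Aset_succ_nonempty n
    refine ⟨(b ++ a₁) ++ (c ++ (d ++ e)), ⟨b ++ a₁, ?_, c ++ (d ++ e), ?_, rfl⟩, ?_⟩
    · rw [Bset_succ_succ]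
      exact Or.inr ⟨b, hb, a₁, ha₁, rfl⟩
    · exact ⟨c, hc, d ++ e, ⟨d, hd, e, he, rfl⟩, rfl⟩
    rw [← List.append_assoc, List.dropLast_append_of_ne_nil (ne_nil_of_mem_Aset ha₂)]
    exact (List.prefix_append_right_inj _).mpr (hpre.trans ⟨e, List.append_assoc c d e⟩)

lemma image_take_Aset_subset (n : ℕ) :
    List.take (Nat.fib (2 * n) - 1) '' Aset n ⊆
      List.take (Nat.fib (2 * n) - 1) '' concatSet (Bset n) (Aset n) := by
  rintro _ ⟨x, hx, rfl⟩
  obtain ⟨w, hw, hpre⟩ := exists_dropLast_prefix_of_mem_Aset n x hx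
  have htake : x.take (Nat.fib (2 * n) - 1) = x.dropLast := by
    rw [List.dropLast_eq_take, length_of_mem_Aset hx]
  refine ⟨w, hw, ?_⟩
  rw [htake, List.prefix_iff_eq_take.mp hpre, List.length_dropLast, length_of_mem_Aset hx]

theorem prefix_Aset_eq_succ (n : ℕ) (hn : 3 ≤ n) :
    setSlice (Aset n) 1 (Nat.fib (2 * (n - 1)) - 1) =
      setSlice (Aset (n + 1)) 1 (Nat.fib (2 * (n - 1)) - 1) := by
  obtain ⟨m, rfl⟩ : ∃ m, n = m + 3 := ⟨n - 3, by omega⟩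
  rw [show 2 * (m + 3 - 1) = 2 * (m + 2) by omega]
  set L := Nat.fib (2 * (m + 2)) - 1
  have hfib : 3 ≤ Nat.fib (2 * (m + 2)) :=
    le_trans (by decide : 3 ≤ Nat.fib 4) (Nat.fib_mono (by omega))
  have hA : ∀ a ∈ Aset (m + 2), L ≤ a.length := fun a ha => by
    rw [length_of_mem_Aset ha]; omega
  have hBA : ∀ w ∈ concatSet (Bset (m + 2)) (Aset (m + 2)), L ≤ w.length := by
    rintro _ ⟨b, -, a, ha, rfl⟩
    rw [List.length_append]
    exact (hA a ha).trans (Nat.le_add_left _ _)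
  have hB : ∀ b ∈ Bset (m + 3), L ≤ b.length := fun b hb => by
    rw [length_of_mem_Bset hb]
    have := Nat.fib_mono (show 2 * (m + 2) ≤ 2 * (m + 2) + 1 by omega)
    omega
  rw [setSlice_one_eq_image_take _ (by omega), setSlice_one_eq_image_take _ (by omega)]
  calc List.take L '' Aset (m + 3)
      = List.take L '' concatSet (Bset (m + 2)) (Aset (m + 2)) := by
        rw [Aset_succ_succ (m + 1), ← concatSet_assoc,
          image_take_concatSet_of_le hBA (Aset_succ_nonempty _)]
    _ = List.take L '' Bset (m + 3) := by
        rw [Bset_succ_succ (m + 1), Set.image_union,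
          image_take_concatSet_of_le hA (Bset_succ_nonempty _),
          Set.union_eq_right.mpr (image_take_Aset_subset _)]
    _ = List.take L '' Aset (m + 3 + 1) := by
        rw [Aset_succ_succ (m + 2), image_take_concatSet_of_le hB
          ((Aset_succ_nonempty _).concatSet (Aset_succ_nonempty _))]
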